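/- For any vector α ∈ ℝ³ with θ = ‖α‖ and â = α/θ, the matrix exponential exp(−i α·σ) equals I₂cos(θ) − i(â·σ)sin(θ), where σ denotes the triple of Pauli matrices. -/

import Mathlib

open Matrix

/-- The Pauli matrices `σ₁, σ₂, σ₃`. -/
noncomputable def pauli : Fin 3 → Matrix (Fin 2) (Fin 2) ℂ :=
  ![!![1, 0; 0, -1], !![0, 1; 1, 0], !![0, -Complex.I; Complex.I, 0]]

/-- `v·σ = v₁σ₁ + v₂σ₂ + v₃σ₃` for a real vector `v`. -/
noncomputable def pdot (v : Fin 3 → ℝ) : Matrix (Fin 2) (Fin 2) ℂ :=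
  (v 0 : ℂ) • pauli 0 + (v 1 : ℂ) • pauli 1 + (v 2 : ℂ) • pauli 2

/-- Euclidean norm of a vector in ℝ³. -/
noncomputable def nrm3 (α : Fin 3 → ℝ) : ℝ := Real.sqrt (α 0 ^ 2 + α 1 ^ 2 + α 2 ^ 2)

/-- `R(α) = cos(θ)I₂ − i sin(θ)(â·σ)` with `θ = ‖α‖`, `â = α/θ` (and `R(0) = I₂`,
since `α/0 = 0` by convention). -/
noncomputable def Rjones (α : Fin 3 → ℝ) : Matrix (Fin 2) (Fin 2) ℂ :=
  (Real.cos (nrm3 α) : ℂ) • 1 -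
    (Complex.I * Real.sin (nrm3 α)) • pdot (fun i => α i / nrm3 α)

/-!
Since `(â·σ)² = 1`, the spectral projections `(1 ± â·σ)/2` of the involution `â·σ` give an
algebra map `ℂ × ℂ → M₂(ℂ)`. Continuous algebra maps commute with `exp`, and in `ℂ × ℂ` the
exponential is computed componentwise, so `exp(z (â·σ)) = cosh z + sinh z (â·σ)`; taking
`z = -iθ` gives the formula.
-/

open NormedSpace

section Involution

variable {𝕜 𝔸 : Type*} [Field 𝕜] [CharZero 𝕜] [Ring 𝔸] [Algebra 𝕜 𝔸] {A : 𝔸}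

def involutionAlgHom (hA : A * A = 1) : 𝕜 × 𝕜 →ₐ[𝕜] 𝔸 where
  toFun p := ((p.1 + p.2) / 2) • 1 + ((p.1 - p.2) / 2) • A
  map_one' := by norm_num
  map_mul' p q := by
    simp only [Prod.fst_mul, Prod.snd_mul, add_mul, mul_add, smul_mul_assoc, mul_smul_comm,
      one_mul, mul_one, hA]
    module
  map_zero' := by norm_num
  map_add' p q := by
    simp only [Prod.fst_add, Prod.snd_add]
    module
  commutes' c := by simp [Algebra.algebraMap_eq_smul_one]

theorem involutionAlgHom_apply (hA : A * A = 1) (p : 𝕜 × 𝕜) :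
    involutionAlgHom hA p = ((p.1 + p.2) / 2) • (1 : 𝔸) + ((p.1 - p.2) / 2) • A :=
  rfl

end Involution

theorem exp_smul_of_mul_self_eq_one {𝔸 : Type*} [NormedRing 𝔸] [NormedAlgebra ℂ 𝔸] {A : 𝔸}
    (hA : A * A = 1) (z : ℂ) : exp (z • A) = Complex.cosh z • 1 + Complex.sinh z • A := by
  -- needed by `map_exp`; `exp` itself does not depend on the choice of `ℚ`-algebra structure
  let : Algebra ℚ 𝔸 := Algebra.compHom 𝔸 (algebraMap ℚ ℂ)
  have hzA : z • A = involutionAlgHom hA (z, -z) := by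
    rw [involutionAlgHom_apply]
    module
  have hcont : Continuous (involutionAlgHom (𝕜 := ℂ) hA) :=
    (involutionAlgHom (𝕜 := ℂ) (𝔸 := 𝔸) hA).toLinearMap.continuous_of_finiteDimensional
  rw [hzA, ← map_exp _ hcont, involutionAlgHom_apply, Prod.fst_exp, Prod.snd_exp,
    ← Complex.exp_eq_exp_ℂ, Complex.cosh, Complex.sinh]

theorem pdot_mul_self (v : Fin 3 → ℝ) : pdot v * pdot v = ((nrm3 v ^ 2 : ℝ) : ℂ) • 1 := by
  rw [nrm3, Real.sq_sqrt (by positivity)]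
  ext i j
  fin_cases i <;> fin_cases j <;>
    simp [pdot, pauli, Matrix.mul_apply, Fin.sum_univ_succ] <;> ring_nf <;> simp [Complex.I_sq]

theorem pdot_smul (c : ℝ) (v : Fin 3 → ℝ) : pdot (c • v) = (c : ℂ) • pdot v := by
  simp only [pdot, Pi.smul_apply, smul_eq_mul, Complex.ofReal_mul, smul_add, smul_smul]

theorem nrm3_smul (c : ℝ) (v : Fin 3 → ℝ) : nrm3 (c • v) = |c| * nrm3 v := by
  simp only [nrm3, Pi.smul_apply, smul_eq_mul, mul_pow]
  rw [← mul_add, ← mul_add, Real.sqrt_mul (sq_nonneg c), Real.sqrt_sq_eq_abs]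

theorem nrm3_eq_zero {v : Fin 3 → ℝ} : nrm3 v = 0 ↔ v = 0 := by
  refine ⟨fun h => ?_, fun h => by simp [h, nrm3]⟩
  have hsum : v 0 ^ 2 + v 1 ^ 2 + v 2 ^ 2 = 0 :=
    le_antisymm (Real.sqrt_eq_zero'.mp h) (by positivity)
  ext i
  fin_cases i <;> simp <;> nlinarith [sq_nonneg (v 0), sq_nonneg (v 1), sq_nonneg (v 2)]

theorem exp_pauli (α : Fin 3 → ℝ) :
    NormedSpace.exp (-(Complex.I • pdot α)) =
      (Real.cos (nrm3 α) : ℂ) • 1 -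
        (Complex.I * Real.sin (nrm3 α)) • pdot (fun i => α i / nrm3 α) := by
  set θ := nrm3 α with hθ_def
  obtain hθ | hθ := eq_or_ne θ 0
  · obtain rfl : α = 0 := nrm3_eq_zero.mp hθ
    simp [hθ, pdot]
  have hâ : (fun i => α i / θ) = θ⁻¹ • α := by
    ext i
    simp [div_eq_inv_mul]
  have hA : pdot (θ⁻¹ • α) * pdot (θ⁻¹ • α) = 1 := by
    have hθ_nonneg : 0 ≤ θ := Real.sqrt_nonneg _
    rw [pdot_mul_self, nrm3_smul, abs_inv, abs_of_nonneg hθ_nonneg, ← hθ_def, inv_mul_cancel₀ hθ]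
    simp
  have hα : -(Complex.I • pdot α) = (-θ * Complex.I : ℂ) • pdot (θ⁻¹ • α) := by
    have hθ' : (θ : ℂ) ≠ 0 := Complex.ofReal_ne_zero.mpr hθ
    rw [pdot_smul, smul_smul, Complex.ofReal_inv]
    field_simp
    module
  -- `exp` only sees the topology, so any submultiplicative matrix norm will do
  let : NormedRing (Matrix (Fin 2) (Fin 2) ℂ) := Matrix.linftyOpNormedRing
  let : NormedAlgebra ℂ (Matrix (Fin 2) (Fin 2) ℂ) := Matrix.linftyOpNormedAlgebra
  rw [hâ, hα]
  refine (exp_smul_of_mul_self_eq_one hA _).trans ?_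
  rw [Complex.cosh_mul_I, Complex.sinh_mul_I, Complex.cos_neg, Complex.sin_neg,
    ← Complex.ofReal_cos, ← Complex.ofReal_sin]
  module
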